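/- For c ∈ [0,1], the maximally obese state ρ_c is CHSH nonlocal, i.e. β(ρ_c) > 2, if and only if c < 1/2. -/

import Mathlib

open Matrix Kronecker ComplexOrder

noncomputable section

/-- Pauli matrix σ₁. -/
def σ1 : Matrix (Fin 2) (Fin 2) ℂ := !![0, 1; 1, 0]
/-- Pauli matrix σ₂. -/
def σ2 : Matrix (Fin 2) (Fin 2) ℂ := !![0, -Complex.I; Complex.I, 0]
/-- Pauli matrix σ₃. -/
def σ3 : Matrix (Fin 2) (Fin 2) ℂ := !![1, 0; 0, -1]

/-- The three Pauli matrices. -/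
def pauli : Fin 3 → Matrix (Fin 2) (Fin 2) ℂ := ![σ1, σ2, σ3]

/-- `v · σ = v₁σ₁ + v₂σ₂ + v₃σ₃`. -/
def dotSigma (v : Fin 3 → ℝ) : Matrix (Fin 2) (Fin 2) ℂ := ∑ i, (v i : ℂ) • pauli i

/-- A two-qubit state: positive semidefinite with trace 1. -/
def IsTwoQubitState (ρ : Matrix (Fin 2 × Fin 2) (Fin 2 × Fin 2) ℂ) : Prop :=
  ρ.PosSemidef ∧ ρ.trace = 1

/-- Bob's marginal `tr_A ρ`. -/
def traceA (ρ : Matrix (Fin 2 × Fin 2) (Fin 2 × Fin 2) ℂ) : Matrix (Fin 2) (Fin 2) ℂ :=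
  Matrix.of fun b b' => ∑ a, ρ (a, b) (a, b')

/-- Alice's marginal `tr_B ρ`. -/
def traceB (ρ : Matrix (Fin 2 × Fin 2) (Fin 2 × Fin 2) ℂ) : Matrix (Fin 2) (Fin 2) ℂ :=
  Matrix.of fun a a' => ∑ b, ρ (a, b) (a', b)

/-- A canonical state: Bob's marginal is maximally mixed. -/
def IsCanonical (ρ : Matrix (Fin 2 × Fin 2) (Fin 2 × Fin 2) ℂ) : Prop :=
  IsTwoQubitState ρ ∧ traceA ρ = (1 / 2 : ℂ) • 1

/-- Alice's Bloch vector: `c_i = Re tr(ρ (σ_i ⊗ I))`. -/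
def blochA (ρ : Matrix (Fin 2 × Fin 2) (Fin 2 × Fin 2) ℂ) (i : Fin 3) : ℝ :=
  (Matrix.trace (ρ * (pauli i ⊗ₖ (1 : Matrix (Fin 2) (Fin 2) ℂ)))).re

/-- Euclidean norm of Alice's Bloch vector. -/
def blochNormA (ρ : Matrix (Fin 2 × Fin 2) (Fin 2 × Fin 2) ℂ) : ℝ :=
  Real.sqrt (∑ i, blochA ρ i ^ 2)

/-- A unit vector in ℝ³. -/
def IsUnitVec3 (v : Fin 3 → ℝ) : Prop := ∑ i, v i ^ 2 = 1

/-- The CHSH Bell operator. -/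
def chshOp (a a' b b' : Fin 3 → ℝ) : Matrix (Fin 2 × Fin 2) (Fin 2 × Fin 2) ℂ :=
  dotSigma a ⊗ₖ dotSigma (b + b') + dotSigma a' ⊗ₖ dotSigma (b - b')

/-- Maximal CHSH value `β(ρ)`. -/
def chshValue (ρ : Matrix (Fin 2 × Fin 2) (Fin 2 × Fin 2) ℂ) : ℝ :=
  sSup { x : ℝ | ∃ a a' b b' : Fin 3 → ℝ,
    IsUnitVec3 a ∧ IsUnitVec3 a' ∧ IsUnitVec3 b ∧ IsUnitVec3 b' ∧
    x = |(Matrix.trace (ρ * chshOp a a' b b')).re| }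

/-- The maximally obese state `ρ_c` in the ordered basis `|00⟩,|01⟩,|10⟩,|11⟩`. -/
def rhoMax (c : ℝ) : Matrix (Fin 2 × Fin 2) (Fin 2 × Fin 2) ℂ :=
  Matrix.of fun p q =>
    if p = (0, 0) ∧ q = (0, 0) then (c : ℂ) / 2
    else if p = (0, 1) ∧ q = (0, 1) then (1 / 2 : ℂ)
    else if p = (1, 0) ∧ q = (1, 0) then (1 - (c : ℂ)) / 2
    else if (p = (0, 1) ∧ q = (1, 0)) ∨ (p = (1, 0) ∧ q = (0, 1)) then
      (Real.sqrt (1 - c) : ℂ) / 2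
    else 0

/-- Symmetric extendibility with respect to Alice. -/
def SymExtendible (ρ : Matrix (Fin 2 × Fin 2) (Fin 2 × Fin 2) ℂ) : Prop :=
  ∃ τ : Matrix (Fin 2 × Fin 2 × Fin 2) (Fin 2 × Fin 2 × Fin 2) ℂ,
    τ.PosSemidef ∧
    (∀ a a' b b' : Fin 2, (∑ x, τ (a, x, b) (a', x, b')) = ρ (a, b) (a', b')) ∧
    (∀ a a' b b' : Fin 2, (∑ x, τ (x, a, b) (x, a', b')) = ρ (a, b) (a', b'))

/-- A maximally entangled two-qubit pure state: a unit vector whose Alice marginal is I/2. -/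
def IsMaxEntangled (φ : Fin 2 × Fin 2 → ℂ) : Prop :=
  (∑ p, Complex.normSq (φ p)) = 1 ∧
  ∀ a a' : Fin 2, (∑ b, φ (a, b) * star (φ (a', b))) = if a = a' then (1 / 2 : ℂ) else 0

/-- Fully entangled fraction `f(ρ)`. -/
def fef (ρ : Matrix (Fin 2 × Fin 2) (Fin 2 × Fin 2) ℂ) : ℝ :=
  sSup { x : ℝ | ∃ φ : Fin 2 × Fin 2 → ℂ, IsMaxEntangled φ ∧ x = (star φ ⬝ᵥ ρ.mulVec φ).re }

/-- Partial transpose on Bob's system. -/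
def ptB (ρ : Matrix (Fin 2 × Fin 2) (Fin 2 × Fin 2) ℂ) :
    Matrix (Fin 2 × Fin 2) (Fin 2 × Fin 2) ℂ :=
  Matrix.of fun p q => ρ (p.1, q.2) (q.1, p.2)

/-- The spin-flipped state `ρ̂ = (σ₂⊗σ₂) ρ* (σ₂⊗σ₂)`. -/
def spinFlip (ρ : Matrix (Fin 2 × Fin 2) (Fin 2 × Fin 2) ℂ) :
    Matrix (Fin 2 × Fin 2) (Fin 2 × Fin 2) ℂ :=
  (σ2 ⊗ₖ σ2) * ρ.map star * (σ2 ⊗ₖ σ2)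

/-- Correlation matrix `T_ij = Re tr(ρ (σ_i ⊗ σ_j))`. -/
def corrT (ρ : Matrix (Fin 2 × Fin 2) (Fin 2 × Fin 2) ℂ) : Matrix (Fin 3) (Fin 3) ℝ :=
  Matrix.of fun i j => (Matrix.trace (ρ * (pauli i ⊗ₖ pauli j))).re


lemma key (c : ℝ) (a u : Fin 3 → ℝ) :
    (Matrix.trace (rhoMax c * (dotSigma a ⊗ₖ dotSigma u))).re
      = Real.sqrt (1-c) * (a 0 * u 0 + a 1 * u 1) + (c-1) * (a 2 * u 2) := by
  simp only [Matrix.trace, Matrix.diag, Matrix.mul_apply, rhoMax, dotSigma, pauli, σ1, σ2, σ3,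
    Matrix.kroneckerMap_apply, Fintype.sum_prod_type, Fin.sum_univ_two, Fin.sum_univ_three,
    Matrix.of_apply, Matrix.sum_apply, Matrix.smul_apply, Matrix.cons_val', Matrix.cons_val_zero,
    Matrix.cons_val_one, Matrix.head_cons, Matrix.empty_val', Matrix.cons_val_fin_one,
    Matrix.head_fin_const, Matrix.cons_val_succ, smul_eq_mul, Matrix.cons_val_two, Matrix.tail_cons]
  norm_num [Prod.ext_iff, Complex.ext_iff]
  ring

lemma key2 (c : ℝ) (a a' b b' : Fin 3 → ℝ) :
    (Matrix.trace (rhoMax c * chshOp a a' b b')).re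
      = (Real.sqrt (1-c) * (a 0 * (b 0 + b' 0) + a 1 * (b 1 + b' 1))
          + (c-1) * (a 2 * (b 2 + b' 2)))
        + (Real.sqrt (1-c) * (a' 0 * (b 0 - b' 0) + a' 1 * (b 1 - b' 1))
          + (c-1) * (a' 2 * (b 2 - b' 2))) := by
  rw [chshOp, Matrix.mul_add, Matrix.trace_add, Complex.add_re, key, key]
  simp [Pi.add_apply, Pi.sub_apply]

lemma cauchy3 (a w : Fin 3 → ℝ) (ha : IsUnitVec3 a) :
    |a 0 * w 0 + a 1 * w 1 + a 2 * w 2| ≤ Real.sqrt (w 0 ^2 + w 1 ^2 + w 2 ^2) := by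
  have h2 : (a 0 * w 0 + a 1 * w 1 + a 2 * w 2)^2 ≤ w 0 ^2 + w 1 ^2 + w 2 ^2 := by
    have := ha
    simp only [IsUnitVec3, Fin.sum_univ_three] at this
    nlinarith [sq_nonneg (a 0 * w 1 - a 1 * w 0), sq_nonneg (a 0 * w 2 - a 2 * w 0),
      sq_nonneg (a 1 * w 2 - a 2 * w 1)]
  calc |a 0 * w 0 + a 1 * w 1 + a 2 * w 2|
      = Real.sqrt ((a 0 * w 0 + a 1 * w 1 + a 2 * w 2)^2) := (Real.sqrt_sq_eq_abs _).symm
    _ ≤ _ := Real.sqrt_le_sqrt h2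

lemma chsh_bound (c : ℝ) (hc : c ∈ Set.Icc (0:ℝ) 1) (a a' b b' : Fin 3 → ℝ)
    (ha : IsUnitVec3 a) (ha' : IsUnitVec3 a') (hb : IsUnitVec3 b) (hb' : IsUnitVec3 b') :
    |(Matrix.trace (rhoMax c * chshOp a a' b b')).re| ≤ 2 * Real.sqrt 2 * Real.sqrt (1-c) := by
  set s := Real.sqrt (1-c) with hs
  have hs0 : 0 ≤ s := Real.sqrt_nonneg _
  have hs2 : s^2 = 1 - c := Real.sq_sqrt (by linarith [hc.2])
  have hd : (c-1)^2 ≤ s^2 := by nlinarith [hc.1, hc.2]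
  rw [key2]
  set u : Fin 3 → ℝ := fun i => b i + b' i with hu
  set v : Fin 3 → ℝ := fun i => b i - b' i with hv
  -- w for u
  have h1 : |s * (a 0 * u 0 + a 1 * u 1) + (c-1) * (a 2 * u 2)|
      ≤ Real.sqrt ((s*u 0)^2 + (s*u 1)^2 + ((c-1)*u 2)^2) := by
    have h := cauchy3 a ![s*u 0, s*u 1, (c-1)*u 2] ha
    simp only [Matrix.cons_val_zero, Matrix.cons_val_one, Matrix.head_cons,
      Matrix.cons_val_two, Matrix.tail_cons] at h
    have h' : s * (a 0 * u 0 + a 1 * u 1) + (c-1) * (a 2 * u 2)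
        = a 0 * (s*u 0) + a 1 * (s*u 1) + a 2 * ((c-1)*u 2) := by ring
    rw [h']; exact h
  have h2 : |s * (a' 0 * v 0 + a' 1 * v 1) + (c-1) * (a' 2 * v 2)|
      ≤ Real.sqrt ((s*v 0)^2 + (s*v 1)^2 + ((c-1)*v 2)^2) := by
    have h := cauchy3 a' ![s*v 0, s*v 1, (c-1)*v 2] ha'
    simp only [Matrix.cons_val_zero, Matrix.cons_val_one, Matrix.head_cons,
      Matrix.cons_val_two, Matrix.tail_cons] at h
    have h' : s * (a' 0 * v 0 + a' 1 * v 1) + (c-1) * (a' 2 * v 2)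
        = a' 0 * (s*v 0) + a' 1 * (s*v 1) + a' 2 * ((c-1)*v 2) := by ring
    rw [h']; exact h
  set Nu := (s*u 0)^2 + (s*u 1)^2 + ((c-1)*u 2)^2 with hNu
  set Nv := (s*v 0)^2 + (s*v 1)^2 + ((c-1)*v 2)^2 with hNv
  have hNu0 : 0 ≤ Nu := by positivity
  have hNv0 : 0 ≤ Nv := by positivity
  have hbb : b 0^2 + b 1^2 + b 2^2 = 1 := by
    have := hb; simpa [IsUnitVec3, Fin.sum_univ_three] using this
  have hbb' : b' 0^2 + b' 1^2 + b' 2^2 = 1 := by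
    have := hb'; simpa [IsUnitVec3, Fin.sum_univ_three] using this
  have hsum : Nu + Nv ≤ 4 * s^2 := by
    simp only [hNu, hNv, hu, hv]
    nlinarith [sq_nonneg (b 2), sq_nonneg (b' 2)]
  have step : Real.sqrt Nu + Real.sqrt Nv ≤ Real.sqrt (2 * (Nu + Nv)) := by
    have hx := Real.sq_sqrt hNu0
    have hy := Real.sq_sqrt hNv0
    have hxy : (Real.sqrt Nu + Real.sqrt Nv)^2 ≤ 2 * (Nu + Nv) := by
      nlinarith [sq_nonneg (Real.sqrt Nu - Real.sqrt Nv)]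
    calc Real.sqrt Nu + Real.sqrt Nv
        = Real.sqrt ((Real.sqrt Nu + Real.sqrt Nv)^2) := by
          rw [Real.sqrt_sq (by positivity)]
      _ ≤ _ := Real.sqrt_le_sqrt hxy
  have final : Real.sqrt (2 * (Nu + Nv)) ≤ 2 * Real.sqrt 2 * s := by
    have h8 : 2 * (Nu + Nv) ≤ (2 * Real.sqrt 2 * s)^2 := by
      have : (2 * Real.sqrt 2 * s)^2 = 8 * s^2 := by
        rw [mul_pow, mul_pow, Real.sq_sqrt (by norm_num : (0:ℝ) ≤ 2)]; ring
      rw [this]; linarith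
    calc Real.sqrt (2 * (Nu + Nv)) ≤ Real.sqrt ((2 * Real.sqrt 2 * s)^2) :=
          Real.sqrt_le_sqrt h8
      _ = 2 * Real.sqrt 2 * s := Real.sqrt_sq (by positivity)
  calc |_ + _| ≤ |s * (a 0 * u 0 + a 1 * u 1) + (c-1) * (a 2 * u 2)|
        + |s * (a' 0 * v 0 + a' 1 * v 1) + (c-1) * (a' 2 * v 2)| := abs_add_le _ _
    _ ≤ Real.sqrt Nu + Real.sqrt Nv := add_le_add h1 h2
    _ ≤ Real.sqrt (2 * (Nu + Nv)) := step
    _ ≤ 2 * Real.sqrt 2 * s := final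

lemma two_lt_chsh (c : ℝ) (hc : c ∈ Set.Icc (0:ℝ) 1) :
    2 < chshValue (rhoMax c) ↔ c < 1 / 2 := by
  set s := Real.sqrt (1-c) with hs
  have hs0 : 0 ≤ s := Real.sqrt_nonneg _
  have hs2 : s^2 = 1 - c := Real.sq_sqrt (by linarith [hc.2])
  have hr2 : Real.sqrt 2 ^ 2 = 2 := Real.sq_sqrt (by norm_num)
  have hr20 : 0 ≤ Real.sqrt 2 := Real.sqrt_nonneg _
  set S := { x : ℝ | ∃ a a' b b' : Fin 3 → ℝ,
    IsUnitVec3 a ∧ IsUnitVec3 a' ∧ IsUnitVec3 b ∧ IsUnitVec3 b' ∧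
    x = |(Matrix.trace (rhoMax c * chshOp a a' b b')).re| } with hS
  have hBdd : BddAbove S := by
    refine ⟨2 * Real.sqrt 2 * s, ?_⟩
    rintro x ⟨a, a', b, b', ha, ha', hb, hb', rfl⟩
    exact chsh_bound c hc a a' b b' ha ha' hb hb'
  -- witness
  set q : ℝ := Real.sqrt 2 / 2 with hq
  have hq2 : q^2 = 1/2 := by rw [hq, div_pow, hr2]; norm_num
  have hxel : (2 * Real.sqrt 2 * s) ∈ S := by
    refine ⟨![1,0,0], ![0,1,0], ![q,q,0], ![q,-q,0], ?_, ?_, ?_, ?_, ?_⟩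
    · simp [IsUnitVec3, Fin.sum_univ_three]
    · simp [IsUnitVec3, Fin.sum_univ_three]
    · simp [IsUnitVec3, Fin.sum_univ_three, hq2]; linarith
    · simp [IsUnitVec3, Fin.sum_univ_three, hq2]; linarith
    · have hval : (Matrix.trace (rhoMax c * chshOp ![1,0,0] ![0,1,0] ![q,q,0] ![q,-q,0])).re
          = 2 * Real.sqrt 2 * s := by
        rw [key2]
        simp only [Matrix.cons_val_zero, Matrix.cons_val_one, Matrix.head_cons,
          Matrix.cons_val_two, Matrix.tail_cons]
        rw [hq, ← hs]; ring
      rw [hval, abs_of_nonneg (by positivity)]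
  have hchsh : chshValue (rhoMax c) = sSup S := rfl
  constructor
  · intro h
    by_contra hge
    push_neg at hge
    have hle : chshValue (rhoMax c) ≤ 2 := by
      rw [hchsh]
      apply Real.sSup_le _ (by norm_num)
      rintro x ⟨a, a', b, b', ha, ha', hb, hb', rfl⟩
      refine le_trans (chsh_bound c hc a a' b b' ha ha' hb hb') ?_
      nlinarith [mul_nonneg (mul_nonneg (by norm_num : (0:ℝ) ≤ 2) hr20) hs0]
    linarith
  · intro h
    have hx2 : 2 < 2 * Real.sqrt 2 * s := by
      nlinarith [mul_nonneg (mul_nonneg (by norm_num : (0:ℝ) ≤ 2) hr20) hs0]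
    have := le_csSup hBdd hxel
    rw [hchsh]; linarith

/-- `ρ_c` is CHSH nonlocal (`β(ρ_c) > 2`) iff `c < 1/2`. -/
theorem rhoMax_chsh_nonlocal_iff (c : ℝ) (hc : c ∈ Set.Icc (0 : ℝ) 1) :
    2 < chshValue (rhoMax c) ↔ c < 1 / 2 := by
  exact two_lt_chsh c hc
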